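/- Every symmetric rigid algebra in Rex^f is a p-pivotal category: its underlying monoidal category is p-rigid, and the symmetry isomorphism of the cyclic structure induces, via the identifications C(P ⊗ Q, I) ≅ C(P, Q^∨) and C(Q ⊗ P, I) ≅ C(P, ^∨Q) for projective P, Q and the Yoneda lemma, a natural isomorphism Q^∨ → ^∨Q on the subcategory of projective objects which, by the cocycle condition on the symmetry, is a pivotal structure. -/

import Mathlib

/-!
# Statement 3 (Müller–Woike, "Categorified Open Topological Field Theories", Proposition `PropSymrigid`)

Every symmetric rigid algebra in `Rex^f` is a p-pivotal category: its underlying monoidal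
category is p-rigid, and the symmetry isomorphism of the cyclic structure induces, via the
identifications `C(P ⊗ Q, 1) ≅ C(P, Q^∨)` and `C(Q ⊗ P, 1) ≅ C(P, ^∨Q)` for projective `P, Q`
and the Yoneda lemma, a natural isomorphism `Q^∨ ⟶ ^∨Q` on the subcategory of projective
objects which, by the cocycle condition on the symmetry, is a pivotal structure.

Formalization notes.  The ambient finite linear category (an object of `Rex^f`) is modeled as a
monoidal abelian `k`-linear category with finite-dimensional hom spaces and enough projectives.
By the theorem of Brochier–Jordan–Safronov–Snyder quoted in the paper, rigid algebras in
`Rex^f` are exactly p-rigid categories; accordingly the underlying rigid algebra is encoded by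
a `PRigidStructure` (a choice of projective left and right duals for all projective objects;
the fact that the monoidal product preserves projectives, which holds in any p-rigid category,
is the hypothesis `htens`).  The symmetry of the cyclic structure is encoded by the natural
isomorphisms `ψ_{X,Y} : C(X ⊗ Y, 1) ≅ C(Y ⊗ X, 1)` squaring to the identity and satisfying the
cocycle condition `ψ_{X⊗Y,Z} ∘ ψ_{Y⊗Z,X} ∘ ψ_{Z⊗X,Y} = id` (with associators inserted).  The
conclusion produces the p-pivotal structure: isomorphisms `P^{∨∨} ≅ P` for all projective `P`,
natural with respect to double adjoint mates, and monoidal: on a tensor product `P ⊗ Q` the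
pivotal isomorphism agrees with `piv P ⊗ piv Q` through every comparison map
`(P ⊗ Q)^{∨∨} ⟶ P^{∨∨} ⊗ Q^{∨∨}` compatible with the canonical pairings.
-/

open CategoryTheory MonoidalCategory

noncomputable section

variable {C : Type} [Category.{0} C] [MonoidalCategory C]

/-- A p-rigid structure: a choice, for every projective object, of a projective right dual and
a projective left dual. -/
structure PRigidStructure (C : Type) [Category.{0} C] [MonoidalCategory C] where
  rdual : ∀ P : C, Projective P → C
  rpair : ∀ (P : C) (h : Projective P), ExactPairing P (rdual P h)
  rprojective : ∀ (P : C) (h : Projective P), Projective (rdual P h)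
  ldual : ∀ P : C, Projective P → C
  lpair : ∀ (P : C) (h : Projective P), ExactPairing (ldual P h) P
  lprojective : ∀ (P : C) (h : Projective P), Projective (ldual P h)

/-- The symmetry isomorphisms of a symmetric rigid algebra in `Rex^f`:
`ψ_{X,Y} : C(X ⊗ Y, 1) ≅ C(Y ⊗ X, 1)`, natural, squaring to the identity and satisfying the
cocycle condition. -/
structure SymmetryData (C : Type) [Category.{0} C] [MonoidalCategory C] where
  ψ : ∀ X Y : C, (X ⊗ Y ⟶ 𝟙_ C) ≃ (Y ⊗ X ⟶ 𝟙_ C)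
  natural : ∀ {X X' Y Y' : C} (f : X' ⟶ X) (g : Y' ⟶ Y) (u : X ⊗ Y ⟶ 𝟙_ C),
    ψ X' Y' ((f ⊗ₘ g) ≫ u) = (g ⊗ₘ f) ≫ ψ X Y u
  invol : ∀ (X Y : C) (u : X ⊗ Y ⟶ 𝟙_ C), ψ Y X (ψ X Y u) = u
  cocycle : ∀ (X Y Z : C) (u : (X ⊗ Y) ⊗ Z ⟶ 𝟙_ C),
    (α_ X Y Z).hom ≫ ψ (Y ⊗ Z) X ((α_ Y Z X).hom ≫
      ψ (Z ⊗ X) Y ((α_ Z X Y).hom ≫ ψ (X ⊗ Y) Z u)) = u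

/-- The adjoint mate of a morphism with respect to chosen exact pairings. -/
def mateOf {P Q Pd Qd : C} (pP : ExactPairing P Pd) (pQ : ExactPairing Q Qd)
    (f : P ⟶ Q) : Qd ⟶ Pd :=
  (ρ_ Qd).inv ≫ (Qd ◁ pP.coevaluation') ≫ (Qd ◁ (f ▷ Pd)) ≫ (α_ Qd Q Pd).inv ≫
    (pQ.evaluation' ▷ Pd) ≫ (λ_ Pd).hom

/-- The evaluation `(Qd ⊗ Pd) ⊗ (P ⊗ Q) ⟶ 1` induced by evaluations `Pd ⊗ P ⟶ 1` and
`Qd ⊗ Q ⟶ 1`: the canonical pairing exhibiting `Qd ⊗ Pd` as a dual of `P ⊗ Q`. -/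
def tensorEvaluation {P Pd Q Qd : C} (evP : Pd ⊗ P ⟶ 𝟙_ C) (evQ : Qd ⊗ Q ⟶ 𝟙_ C) :
    (Qd ⊗ Pd) ⊗ (P ⊗ Q) ⟶ 𝟙_ C :=
  (α_ Qd Pd (P ⊗ Q)).hom ≫ (Qd ◁ ((α_ Pd P Q).inv ≫ (evP ▷ Q) ≫ (λ_ Q).hom)) ≫ evQ

section Aux

/-- Naturality of the symmetry in the first variable. -/
lemma SymmetryData.natural_left (sym : SymmetryData C) {X X' Y : C} (f : X' ⟶ X)
    (u : X ⊗ Y ⟶ 𝟙_ C) :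
    sym.ψ X' Y (f ▷ Y ≫ u) = Y ◁ f ≫ sym.ψ X Y u := by
  simpa using sym.natural f (𝟙 Y) u

/-- Naturality of the symmetry in the second variable. -/
lemma SymmetryData.natural_right (sym : SymmetryData C) {X Y Y' : C} (g : Y' ⟶ Y)
    (u : X ⊗ Y ⟶ 𝟙_ C) :
    sym.ψ X Y' (X ◁ g ≫ u) = g ▷ X ≫ sym.ψ X Y u := by
  simpa using sym.natural (𝟙 X) g u

/-- The "left transposition" bijection `(X ⟶ P) ≃ (Pd ⊗ X ⟶ 1)` coming from an exact
pairing exhibiting `Pd` as a right dual of `P`. -/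
@[simps] def lT {P Pd : C} (p : ExactPairing P Pd) (X : C) :
    (X ⟶ P) ≃ (Pd ⊗ X ⟶ 𝟙_ C) where
  toFun f := Pd ◁ f ≫ p.evaluation'
  invFun u := (λ_ X).inv ≫ p.coevaluation' ▷ X ≫ (α_ P Pd X).hom ≫ P ◁ u ≫ (ρ_ P).hom
  left_inv f := by
    letI := p
    rw [show p.coevaluation' = η_ P Pd from rfl, show p.evaluation' = ε_ P Pd from rfl]
    calc
      _ = 𝟙 _ ⊗≫ (η_ P Pd ▷ X ≫ (P ⊗ Pd) ◁ f) ⊗≫ P ◁ ε_ P Pd ⊗≫ 𝟙 _ := by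
        monoidal
      _ = 𝟙 _ ⊗≫ 𝟙_ C ◁ f ⊗≫ (η_ P Pd ▷ P ⊗≫ P ◁ ε_ P Pd) ⊗≫ 𝟙 _ := by
        rw [← whisker_exchange]; monoidal
      _ = f := by
        rw [ExactPairing.evaluation_coevaluation'']; monoidal
  right_inv u := by
    letI := p
    rw [show p.coevaluation' = η_ P Pd from rfl, show p.evaluation' = ε_ P Pd from rfl]
    calc
      _ = 𝟙 _ ⊗≫ Pd ◁ (η_ P Pd ▷ X) ⊗≫ ((Pd ⊗ P) ◁ u ≫ ε_ P Pd ▷ 𝟙_ C) ⊗≫ 𝟙 _ := by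
        monoidal
      _ = 𝟙 _ ⊗≫ (Pd ◁ η_ P Pd ⊗≫ ε_ P Pd ▷ Pd) ▷ X ⊗≫ u := by
        rw [whisker_exchange]; monoidal
      _ = u := by
        rw [ExactPairing.coevaluation_evaluation'']; monoidal

/-- The "right transposition" bijection `(X ⟶ Pdd) ≃ (X ⊗ Pd ⟶ 1)` coming from an exact
pairing exhibiting `Pdd` as a right dual of `Pd`. -/
@[simps] def rT {Pd Pdd : C} (p' : ExactPairing Pd Pdd) (X : C) :
    (X ⟶ Pdd) ≃ (X ⊗ Pd ⟶ 𝟙_ C) where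
  toFun f := f ▷ Pd ≫ p'.evaluation'
  invFun u := (ρ_ X).inv ≫ X ◁ p'.coevaluation' ≫ (α_ X Pd Pdd).inv ≫ u ▷ Pdd ≫ (λ_ Pdd).hom
  left_inv f := by
    letI := p'
    rw [show p'.coevaluation' = η_ Pd Pdd from rfl, show p'.evaluation' = ε_ Pd Pdd from rfl]
    calc
      _ = 𝟙 _ ⊗≫ (X ◁ η_ Pd Pdd ≫ f ▷ (Pd ⊗ Pdd)) ⊗≫ ε_ Pd Pdd ▷ Pdd ⊗≫ 𝟙 _ := by
        monoidal
      _ = f ⊗≫ (Pdd ◁ η_ Pd Pdd ⊗≫ ε_ Pd Pdd ▷ Pdd) ⊗≫ 𝟙 _ := by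
        rw [whisker_exchange]; monoidal
      _ = f := by
        rw [ExactPairing.coevaluation_evaluation'']; monoidal
  right_inv u := by
    letI := p'
    rw [show p'.coevaluation' = η_ Pd Pdd from rfl, show p'.evaluation' = ε_ Pd Pdd from rfl]
    calc
      _ = 𝟙 _ ⊗≫ X ◁ (η_ Pd Pdd ▷ Pd) ⊗≫ (u ▷ (Pdd ⊗ Pd) ≫ 𝟙_ C ◁ ε_ Pd Pdd) ⊗≫ 𝟙 _ := by
        monoidal
      _ = 𝟙 _ ⊗≫ X ◁ (η_ Pd Pdd ▷ Pd ⊗≫ Pd ◁ ε_ Pd Pdd) ⊗≫ u := by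
        rw [← whisker_exchange]; monoidal
      _ = u := by
        rw [ExactPairing.evaluation_coevaluation'']; monoidal

/-- The ψ-twisted transposition `(X ⟶ P) ≃ (X ⊗ Pd ⟶ 1)`. -/
def EPsi (sym : SymmetryData C) {P Pd : C} (p : ExactPairing P Pd) (X : C) :
    (X ⟶ P) ≃ (X ⊗ Pd ⟶ 𝟙_ C) :=
  (lT p X).trans (sym.ψ Pd X)

lemma EPsi_apply (sym : SymmetryData C) {P Pd : C} (p : ExactPairing P Pd) (X : C)
    (f : X ⟶ P) :
    EPsi sym p X f = f ▷ Pd ≫ sym.ψ Pd P p.evaluation' := by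
  dsimp only [EPsi, Equiv.trans_apply, lT_apply]
  exact sym.natural_right f p.evaluation'

/-- The pivotal morphism `P^{∨∨} ⟶ P` induced by the symmetry. -/
def pivHom (sym : SymmetryData C) {P Pd Pdd : C} (p : ExactPairing P Pd)
    (p' : ExactPairing Pd Pdd) : Pdd ⟶ P :=
  (EPsi sym p Pdd).symm p'.evaluation'

lemma pivHom_spec (sym : SymmetryData C) {P Pd Pdd : C} (p : ExactPairing P Pd)
    (p' : ExactPairing Pd Pdd) :
    pivHom sym p p' ▷ Pd ≫ sym.ψ Pd P p.evaluation' = p'.evaluation' := by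
  rw [← EPsi_apply]
  exact (EPsi sym p Pdd).apply_symm_apply _

/-- The inverse pivotal morphism `P ⟶ P^{∨∨}`. -/
def pivInv (sym : SymmetryData C) {P Pd Pdd : C} (p : ExactPairing P Pd)
    (p' : ExactPairing Pd Pdd) : P ⟶ Pdd :=
  (rT p' P).symm (sym.ψ Pd P p.evaluation')

lemma pivInv_spec (sym : SymmetryData C) {P Pd Pdd : C} (p : ExactPairing P Pd)
    (p' : ExactPairing Pd Pdd) :
    pivInv sym p p' ▷ Pd ≫ p'.evaluation' = sym.ψ Pd P p.evaluation' := by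
  rw [← rT_apply]
  exact (rT p' P).apply_symm_apply _

/-- The pivotal isomorphism `P^{∨∨} ≅ P`. -/
def pivIso (sym : SymmetryData C) {P Pd Pdd : C} (p : ExactPairing P Pd)
    (p' : ExactPairing Pd Pdd) : Pdd ≅ P where
  hom := pivHom sym p p'
  inv := pivInv sym p p'
  hom_inv_id := by
    apply (rT p' Pdd).injective
    simp only [rT_apply, comp_whiskerRight, Category.assoc, id_whiskerRight, Category.id_comp]
    rw [pivInv_spec, pivHom_spec]
  inv_hom_id := by
    apply (EPsi sym p P).injective
    rw [EPsi_apply, EPsi_apply]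
    simp only [comp_whiskerRight, Category.assoc, id_whiskerRight, Category.id_comp]
    rw [pivHom_spec, pivInv_spec]

/-- The defining property of the adjoint mate. -/
lemma mateOf_whiskerRight_evaluation {P Q Pd Qd : C} (pP : ExactPairing P Pd)
    (pQ : ExactPairing Q Qd) (f : P ⟶ Q) :
    mateOf pP pQ f ▷ P ≫ pP.evaluation' = Qd ◁ f ≫ pQ.evaluation' := by
  letI := pP; letI := pQ
  letI : HasRightDual P := ⟨Pd⟩
  letI : HasRightDual Q := ⟨Qd⟩
  exact rightAdjointMate_comp_evaluation f

/-- Naturality of the pivotal morphism with respect to double adjoint mates. -/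
lemma piv_natural (sym : SymmetryData C) {P Pd Pdd Q Qd Qdd : C}
    (pP : ExactPairing P Pd) (pP' : ExactPairing Pd Pdd)
    (pQ : ExactPairing Q Qd) (pQ' : ExactPairing Qd Qdd) (f : P ⟶ Q) :
    mateOf pQ' pP' (mateOf pP pQ f) ≫ pivHom sym pQ pQ' = pivHom sym pP pP' ≫ f := by
  apply (EPsi sym pQ Pdd).injective
  rw [EPsi_apply, EPsi_apply]
  rw [comp_whiskerRight, Category.assoc, pivHom_spec,
    mateOf_whiskerRight_evaluation pQ' pP' (mateOf pP pQ f)]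
  rw [comp_whiskerRight, Category.assoc, ← sym.natural_right f pQ.evaluation',
    ← mateOf_whiskerRight_evaluation pP pQ f, sym.natural_left, ← Category.assoc,
    ← whisker_exchange, Category.assoc, pivHom_spec]

/-- `tensorEvaluation` is natural. -/
lemma tensorEvaluation_whiskerLeft {P P' Pd Q Q' Qd : C} (evP : Pd ⊗ P ⟶ 𝟙_ C)
    (evQ : Qd ⊗ Q ⟶ 𝟙_ C) (a : P' ⟶ P) (b : Q' ⟶ Q) :
    (Qd ⊗ Pd) ◁ (a ⊗ₘ b) ≫ tensorEvaluation evP evQ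
      = tensorEvaluation (Pd ◁ a ≫ evP) (Qd ◁ b ≫ evQ) := by
  dsimp only [tensorEvaluation]
  calc
    _ = 𝟙 _ ⊗≫ Qd ◁ ((Pd ◁ a) ▷ Q') ⊗≫ Qd ◁ ((Pd ⊗ P) ◁ b ≫ evP ▷ Q) ⊗≫ evQ := by
      rw [MonoidalCategory.tensorHom_def]; monoidal
    _ = 𝟙 _ ⊗≫ Qd ◁ ((Pd ◁ a) ▷ Q') ⊗≫ Qd ◁ (evP ▷ Q' ≫ 𝟙_ C ◁ b) ⊗≫ evQ := by
      rw [whisker_exchange]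
    _ = _ := by monoidal

/-- Key computation: the symmetry carries the tensor-product pairing of the twisted
pairings to the tensor-product pairing in the opposite order (cocycle condition). -/
lemma psi_tensorEvaluation (sym : SymmetryData C) {A X B Y : C}
    (e : A ⊗ X ⟶ 𝟙_ C) (f : B ⊗ Y ⟶ 𝟙_ C) :
    sym.ψ (Y ⊗ X) (A ⊗ B) (tensorEvaluation (sym.ψ A X e) (sym.ψ B Y f))
      = tensorEvaluation f e := by
  have rot : ∀ (X₁ Y₁ Z₁ : C) (v : Z₁ ⊗ (X₁ ⊗ Y₁) ⟶ 𝟙_ C),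
      sym.ψ Z₁ (X₁ ⊗ Y₁) v = (α_ X₁ Y₁ Z₁).hom ≫ sym.ψ (Y₁ ⊗ Z₁) X₁ ((α_ Y₁ Z₁ X₁).hom ≫
        sym.ψ (Z₁ ⊗ X₁) Y₁ ((α_ Z₁ X₁ Y₁).hom ≫ v)) := by
    intro X₁ Y₁ Z₁ v
    have h := sym.cocycle X₁ Y₁ Z₁ (sym.ψ Z₁ (X₁ ⊗ Y₁) v)
    rw [sym.invol] at h
    exact h.symm
  rw [rot A B (Y ⊗ X)]
  have h1 : (α_ (Y ⊗ X) A B).hom ≫ tensorEvaluation (sym.ψ A X e) (sym.ψ B Y f)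
      = ((α_ Y X A).hom ≫ Y ◁ sym.ψ A X e ≫ (ρ_ Y).hom) ▷ B ≫ sym.ψ B Y f := by
    dsimp only [tensorEvaluation]; monoidal
  rw [h1, sym.natural_left, sym.invol]
  have h3 : (α_ B (Y ⊗ X) A).hom ≫
        (B ◁ ((α_ Y X A).hom ≫ Y ◁ sym.ψ A X e ≫ (ρ_ Y).hom) ≫ f)
      = ((α_ B Y X).inv ≫ f ▷ X ≫ (λ_ X).hom) ▷ A ≫ sym.ψ A X e := by
    calc
      _ = 𝟙 _ ⊗≫ (((B ⊗ Y) : C) ◁ sym.ψ A X e ≫ f ▷ 𝟙_ C) ⊗≫ 𝟙 _ := by monoidal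
      _ = 𝟙 _ ⊗≫ (f ▷ (X ⊗ A) ≫ 𝟙_ C ◁ sym.ψ A X e) ⊗≫ 𝟙 _ := by rw [whisker_exchange]
      _ = _ := by monoidal
  rw [h3, sym.natural_left, sym.invol]
  dsimp only [tensorEvaluation]

/-- Monoidality of the pivotal morphism. -/
lemma piv_tensor (sym : SymmetryData C) {P Pd Pdd Q Qd Qdd Td Tdd : C}
    (pP : ExactPairing P Pd) (pP' : ExactPairing Pd Pdd)
    (pQ : ExactPairing Q Qd) (pQ' : ExactPairing Qd Qdd)
    (pT : ExactPairing (P ⊗ Q) Td) (pT' : ExactPairing Td Tdd)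
    (γ₁ : Td ⟶ Qd ⊗ Pd)
    (h₁ : γ₁ ▷ (P ⊗ Q) ≫ tensorEvaluation pP.evaluation' pQ.evaluation' = pT.evaluation')
    (γ₂ : Tdd ⟶ Pdd ⊗ Qdd)
    (h₂ : γ₂ ▷ Td ≫ ((Pdd ⊗ Qdd) ◁ γ₁) ≫
        tensorEvaluation pQ'.evaluation' pP'.evaluation' = pT'.evaluation') :
    pivHom sym pT pT' = γ₂ ≫ (pivHom sym pP pP' ⊗ₘ pivHom sym pQ pQ') := by
  have h4P : Pd ◁ pivHom sym pP pP' ≫ pP.evaluation'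
      = sym.ψ Pdd Pd pP'.evaluation' := by
    rw [← pivHom_spec sym pP pP', ← sym.natural_right, sym.invol]
  have h4Q : Qd ◁ pivHom sym pQ pQ' ≫ pQ.evaluation'
      = sym.ψ Qdd Qd pQ'.evaluation' := by
    rw [← pivHom_spec sym pQ pQ', ← sym.natural_right, sym.invol]
  have harg : Td ◁ (pivHom sym pP pP' ⊗ₘ pivHom sym pQ pQ') ≫ pT.evaluation'
      = γ₁ ▷ (Pdd ⊗ Qdd) ≫ tensorEvaluation (sym.ψ Pdd Pd pP'.evaluation')
          (sym.ψ Qdd Qd pQ'.evaluation') := by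
    rw [← h₁, ← Category.assoc, whisker_exchange, Category.assoc,
      tensorEvaluation_whiskerLeft, h4P, h4Q]
  apply (EPsi sym pT Tdd).injective
  rw [EPsi_apply, EPsi_apply, pivHom_spec]
  rw [comp_whiskerRight, Category.assoc,
    ← sym.natural_right (pivHom sym pP pP' ⊗ₘ pivHom sym pQ pQ') pT.evaluation']
  rw [harg, sym.natural_left, psi_tensorEvaluation]
  exact h₂.symm

end Aux

theorem symmetric_rigid_algebras_in_Rexf_are_p_pivotal
    {k : Type} [Field k] [IsAlgClosed k]
    -- `C` is an object of `Rex^f` with a monoidal structure: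
    [Abelian C] [Linear k C] [EnoughProjectives C] [∀ X Y : C, FiniteDimensional k (X ⟶ Y)]
    -- the underlying rigid algebra of the symmetric rigid algebra, i.e. (by
    -- Brochier–Jordan–Safronov–Snyder) a p-rigid structure on `C`:
    (pr : PRigidStructure C)
    -- in a p-rigid category the monoidal product is exact and preserves projectives:
    (htens : ∀ P Q : C, Projective P → Projective Q → Projective (P ⊗ Q))
    -- the symmetry isomorphism of the cyclic structure:
    (sym : SymmetryData C) :
    -- conclusion: `C` is p-pivotal, i.e. there is a pivotal structure
    -- `piv : P^{∨∨} ≅ P` on the subcategory of projective objects: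
    ∃ piv : ∀ (P : C) (hP : Projective P),
        pr.rdual (pr.rdual P hP) (pr.rprojective P hP) ≅ P,
      -- naturality of `piv` with respect to double adjoint mates:
      (∀ (P Q : C) (hP : Projective P) (hQ : Projective Q) (f : P ⟶ Q),
        mateOf (pr.rpair (pr.rdual Q hQ) (pr.rprojective Q hQ))
            (pr.rpair (pr.rdual P hP) (pr.rprojective P hP))
            (mateOf (pr.rpair P hP) (pr.rpair Q hQ) f) ≫ (piv Q hQ).hom =
          (piv P hP).hom ≫ f) ∧
      -- monoidality of `piv` (through every pairing-compatible comparison morphism):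
      (∀ (P Q : C) (hP : Projective P) (hQ : Projective Q)
        (γ₁ : pr.rdual (P ⊗ Q) (htens P Q hP hQ) ⟶ pr.rdual Q hQ ⊗ pr.rdual P hP),
        (γ₁ ▷ (P ⊗ Q)) ≫
            tensorEvaluation (pr.rpair P hP).evaluation' (pr.rpair Q hQ).evaluation' =
          (pr.rpair (P ⊗ Q) (htens P Q hP hQ)).evaluation' →
        ∀ γ₂ : pr.rdual (pr.rdual (P ⊗ Q) (htens P Q hP hQ))
              (pr.rprojective (P ⊗ Q) (htens P Q hP hQ)) ⟶
            pr.rdual (pr.rdual P hP) (pr.rprojective P hP) ⊗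
              pr.rdual (pr.rdual Q hQ) (pr.rprojective Q hQ),
          (γ₂ ▷ pr.rdual (P ⊗ Q) (htens P Q hP hQ)) ≫
              ((pr.rdual (pr.rdual P hP) (pr.rprojective P hP) ⊗
                  pr.rdual (pr.rdual Q hQ) (pr.rprojective Q hQ)) ◁ γ₁) ≫
              tensorEvaluation
                (pr.rpair (pr.rdual Q hQ) (pr.rprojective Q hQ)).evaluation'
                (pr.rpair (pr.rdual P hP) (pr.rprojective P hP)).evaluation' =
            (pr.rpair (pr.rdual (P ⊗ Q) (htens P Q hP hQ))
              (pr.rprojective (P ⊗ Q) (htens P Q hP hQ))).evaluation' →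
          (piv (P ⊗ Q) (htens P Q hP hQ)).hom =
            γ₂ ≫ ((piv P hP).hom ⊗ₘ (piv Q hQ).hom)) := by
  refine ⟨fun P hP => pivIso sym (pr.rpair P hP)
      (pr.rpair (pr.rdual P hP) (pr.rprojective P hP)),
    fun P Q hP hQ f => ?_, fun P Q hP hQ γ₁ h₁ γ₂ h₂ => ?_⟩
  · exact piv_natural sym _ _ _ _ f
  · exact piv_tensor sym _ _ _ _ _ _ γ₁ h₁ γ₂ h₂

end
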